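/- arXiv:2105.10838 — 7 statements merged into one kernel-verified Lean document; each statement's English description precedes it below -/
import Mathlib

section
/- Let a ≥ 1 and b ≥ 0 be integers with d = a + b, and let n ≥ d. Let X and Y be n × d real matrices, each of full column rank d. Then X I_{a,b} Xᵀ = Y I_{a,b} Yᵀ if and only if there exists an invertible d × d real matrix Q such that X = Y Q and Q I_{a,b} Qᵀ = I_{a,b}. -/
/-!
If `L * Y = 1` (such a left inverse exists by full column rank, e.g. `(YᵀY)⁻¹Yᵀ`), then
`M ↦ Y * M * Yᵀ` is injective, since `L` and `Lᵀ` undo it. Given `X J Xᵀ = Y J Yᵀ` and a left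
inverse `L` of `X`, the identity `X = X J Xᵀ Lᵀ J⁻¹ = Y (J Yᵀ Lᵀ J⁻¹)` exhibits `X = Y Q`, and
cancelling `Y` in `Y (Q J Qᵀ) Yᵀ = X J Xᵀ = Y J Yᵀ` gives `Q J Qᵀ = J`; taking determinants,
`Q` is invertible because `J` is.
-/

open Matrix
/-- `I_{a,b}`: the `(a+b) × (a+b)` diagonal matrix whose first `a` diagonal entries
equal `1` and whose last `b` diagonal entries equal `-1`. -/
def Iab (a b : ℕ) : Matrix (Fin (a + b)) (Fin (a + b)) ℝ :=
  Matrix.diagonal (fun i => if (i : ℕ) < a then (1 : ℝ) else -1)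

lemma Iab_mul_self (a b : ℕ) : Iab a b * Iab a b = 1 := by
  rw [Iab, diagonal_mul_diagonal, ← diagonal_one]
  congr 1
  ext i
  split_ifs <;> norm_num

lemma isUnit_det_Iab (a b : ℕ) : IsUnit (Iab a b).det :=
  IsUnit.of_mul_eq_one _ (by rw [← det_mul, Iab_mul_self, det_one])

namespace Matrix

section LeftInverse

variable {m n R : Type*} [Fintype m] [Fintype n] [DecidableEq n] [CommRing R]

lemma eq_of_mul_mul_transpose_eq {L : Matrix n m R} {Y : Matrix m n R} (hL : L * Y = 1)
    {M N : Matrix n n R} (h : Y * M * Yᵀ = Y * N * Yᵀ) : M = N := by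
  have hLt : Yᵀ * Lᵀ = 1 := by rw [← transpose_mul, hL, transpose_one]
  have cancel (K : Matrix n n R) : L * (Y * K * Yᵀ) * Lᵀ = K := by
    simp only [← Matrix.mul_assoc, hL, Matrix.one_mul]
    rw [Matrix.mul_assoc, hLt, Matrix.mul_one]
  rw [← cancel M, h, cancel N]

lemma isUnit_det_of_mul_mul_transpose_eq {J Q : Matrix n n R} (hJ : IsUnit J.det)
    (h : Q * J * Qᵀ = J) : IsUnit Q.det := by
  have hdet : Q.det * Q.det * J.det = J.det := by
    simpa only [det_mul, det_transpose, mul_right_comm] using congrArg det h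
  exact IsUnit.of_mul_eq_one _ (hJ.mul_right_cancel (by rw [hdet, one_mul]))

lemma exists_eq_mul_of_mul_mul_transpose_eq {J : Matrix n n R} (hJ : IsUnit J.det)
    {X Y : Matrix m n R} {L : Matrix n m R} (hL : L * X = 1) (h : X * J * Xᵀ = Y * J * Yᵀ) :
    ∃ Q : Matrix n n R, X = Y * Q := by
  have hLt : Xᵀ * Lᵀ = 1 := by rw [← transpose_mul, hL, transpose_one]
  refine ⟨J * Yᵀ * Lᵀ * J⁻¹, ?_⟩
  calc X = X * J * Xᵀ * Lᵀ * J⁻¹ := by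
        rw [Matrix.mul_assoc X J, Matrix.mul_assoc X, Matrix.mul_assoc J, hLt, Matrix.mul_one,
          Matrix.mul_assoc, mul_nonsing_inv _ hJ, Matrix.mul_one]
    _ = Y * (J * Yᵀ * Lᵀ * J⁻¹) := by rw [h]; simp only [Matrix.mul_assoc]

lemma mul_mul_transpose_eq_mul_mul_transpose_iff {J : Matrix n n R} (hJ : IsUnit J.det)
    {X Y : Matrix m n R} {LX LY : Matrix n m R} (hLX : LX * X = 1) (hLY : LY * Y = 1) :
    X * J * Xᵀ = Y * J * Yᵀ ↔
      ∃ Q : Matrix n n R, IsUnit Q.det ∧ X = Y * Q ∧ Q * J * Qᵀ = J := by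
  constructor
  · intro h
    obtain ⟨Q, hX⟩ := exists_eq_mul_of_mul_mul_transpose_eq hJ hLX h
    have hQ : Q * J * Qᵀ = J := by
      refine eq_of_mul_mul_transpose_eq hLY ?_
      calc Y * (Q * J * Qᵀ) * Yᵀ = (Y * Q) * J * (Y * Q)ᵀ := by
            rw [transpose_mul]; simp only [Matrix.mul_assoc]
        _ = Y * J * Yᵀ := by rw [← hX, h]
    exact ⟨Q, isUnit_det_of_mul_mul_transpose_eq hJ hQ, hX, hQ⟩
  · rintro ⟨Q, -, rfl, hQ⟩
    calc Y * Q * J * (Y * Q)ᵀ = Y * (Q * J * Qᵀ) * Yᵀ := by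
          rw [transpose_mul]; simp only [Matrix.mul_assoc]
      _ = Y * J * Yᵀ := by rw [hQ]

end LeftInverse

lemma isUnit_det_of_rank_eq_card {n K : Type*} [Fintype n] [DecidableEq n] [Field K]
    {A : Matrix n n K} (h : A.rank = Fintype.card n) : IsUnit A.det := by
  rw [← isUnit_iff_isUnit_det, ← mulVec_surjective_iff_isUnit, ← coe_mulVecLin,
    ← LinearMap.range_eq_top]
  apply Submodule.eq_top_of_finrank_eq
  rw [← rank, h, Module.finrank_fintype_fun_eq_card]

lemma exists_mul_eq_one_of_rank_eq_card {m n K : Type*} [Fintype m] [Fintype n]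
    [DecidableEq n] [Field K] [LinearOrder K] [IsStrictOrderedRing K] {X : Matrix m n K}
    (h : X.rank = Fintype.card n) : ∃ L : Matrix n m K, L * X = 1 := by
  have hG : IsUnit (Xᵀ * X).det :=
    isUnit_det_of_rank_eq_card (by rw [rank_transpose_mul_self, h])
  exact ⟨(Xᵀ * X)⁻¹ * Xᵀ, by rw [Matrix.mul_assoc, nonsing_inv_mul _ hG]⟩

end Matrix

theorem stmt0_general (a b n : ℕ)
    (X Y : Matrix (Fin n) (Fin (a + b)) ℝ)
    (hX : X.rank = a + b) (hY : Y.rank = a + b) :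
    X * Iab a b * Xᵀ = Y * Iab a b * Yᵀ ↔
      ∃ Q : Matrix (Fin (a + b)) (Fin (a + b)) ℝ,
        IsUnit Q.det ∧ X = Y * Q ∧ Q * Iab a b * Qᵀ = Iab a b := by
  obtain ⟨LX, hLX⟩ := exists_mul_eq_one_of_rank_eq_card (hX.trans (Fintype.card_fin _).symm)
  obtain ⟨LY, hLY⟩ := exists_mul_eq_one_of_rank_eq_card (hY.trans (Fintype.card_fin _).symm)
  exact mul_mul_transpose_eq_mul_mul_transpose_iff (isUnit_det_Iab a b) hLX hLY

/-- For full column rank `n × (a+b)` real matrices `X, Y` (with `a ≥ 1`,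
`n ≥ a + b`), `X I_{a,b} Xᵀ = Y I_{a,b} Yᵀ` iff there is an invertible matrix `Q` with
`X = Y Q` and `Q I_{a,b} Qᵀ = I_{a,b}`. -/
theorem stmt0 (a b n : ℕ) (ha : 1 ≤ a) (hn : a + b ≤ n)
    (X Y : Matrix (Fin n) (Fin (a + b)) ℝ)
    (hX : X.rank = a + b) (hY : Y.rank = a + b) :
    X * Iab a b * Xᵀ = Y * Iab a b * Yᵀ ↔
      ∃ Q : Matrix (Fin (a + b)) (Fin (a + b)) ℝ,
        IsUnit Q.det ∧ X = Y * Q ∧ Q * Iab a b * Qᵀ = Iab a b :=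
  stmt0_general a b n X Y hX hY
end

section
/- Let a ≥ 1 and b ≥ 0 be integers with d = a + b, and let n ≥ d. Let X and Y be n × d real matrices of full column rank d with X I_{a,b} Xᵀ = Y I_{a,b} Yᵀ. Then the matrix Q = I_{a,b} Yᵀ X (Xᵀ X)⁻¹ I_{a,b} satisfies X = Y Q and Qᵀ I_{a,b} Q = I_{a,b}. -/
/-!
Write `J = I_{a,b}` and `P = X (XᵀX)⁻¹`, a right inverse of `Xᵀ` (the Gram matrix `XᵀX` has
the rank of `X`, hence is invertible), so that `Q = J Yᵀ P J`.
Both identities follow by substituting `Y J Yᵀ = X J Xᵀ` and cancelling with `J² = 1`,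
`Xᵀ P = 1` and `Pᵀ X = 1`:
`Y Q = (Y J Yᵀ) P J = X J (Xᵀ P) J = X` and
`Qᵀ J Q = J Pᵀ (Y J Yᵀ) P J = J (Pᵀ X) J (Xᵀ P) J = J`.
-/

open Matrix

lemma Iab_transpose (a b : ℕ) : (Iab a b)ᵀ = Iab a b :=
  diagonal_transpose _

theorem Matrix.isUnit_of_rank_eq_card {n K : Type*} [Fintype n] [DecidableEq n] [Field K]
    {A : Matrix n n K} (h : A.rank = Fintype.card n) : IsUnit A := by
  rw [← mulVec_surjective_iff_isUnit, ← coe_mulVecLin, ← LinearMap.range_eq_top]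
  exact Submodule.eq_top_of_finrank_eq (by rw [← rank, h, Module.finrank_fintype_fun_eq_card])

section

variable {m d R : Type*} [Fintype m] [Fintype d] [DecidableEq d] [CommRing R]
  {J : Matrix d d R} {X Y P : Matrix m d R}

lemma eq_mul_of_mul_mul_transpose_eq (hJ : J * J = 1) (hXY : X * J * Xᵀ = Y * J * Yᵀ)
    (hP : Xᵀ * P = 1) :
    X = Y * (J * Yᵀ * P * J) :=
  calc X = X * J * (Xᵀ * P) * J := by
        rw [hP, Matrix.mul_one, Matrix.mul_assoc, hJ, Matrix.mul_one]
    _ = Y * J * Yᵀ * P * J := by rw [← hXY]; simp only [Matrix.mul_assoc]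
    _ = Y * (J * Yᵀ * P * J) := by simp only [Matrix.mul_assoc]

lemma transpose_mul_mul_self_of_mul_mul_transpose_eq (hJ : J * J = 1) (hJT : Jᵀ = J)
    (hXY : X * J * Xᵀ = Y * J * Yᵀ) (hP : Xᵀ * P = 1) :
    (J * Yᵀ * P * J)ᵀ * J * (J * Yᵀ * P * J) = J := by
  have hPX : Pᵀ * X = 1 := by rw [← transpose_transpose X, ← transpose_mul, hP, transpose_one]
  have hJJ (Z : Matrix d d R) : J * (J * Z) = Z := by rw [← Matrix.mul_assoc, hJ, Matrix.one_mul]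
  calc (J * Yᵀ * P * J)ᵀ * J * (J * Yᵀ * P * J)
      = J * (Pᵀ * ((Y * J * Yᵀ) * (P * J))) := by
        simp only [transpose_mul, transpose_transpose, hJT, Matrix.mul_assoc, hJJ]
    _ = J * (Pᵀ * X) * J * (Xᵀ * P) * J := by rw [← hXY]; simp only [Matrix.mul_assoc]
    _ = J := by rw [hPX, hP, Matrix.mul_one, Matrix.mul_one, hJ, Matrix.one_mul]

end

theorem stmt1_general (a b n : ℕ)
    (X Y : Matrix (Fin n) (Fin (a + b)) ℝ)
    (hX : X.rank = a + b)
    (hXY : X * Iab a b * Xᵀ = Y * Iab a b * Yᵀ)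
    (Q : Matrix (Fin (a + b)) (Fin (a + b)) ℝ)
    (hQ : Q = Iab a b * Yᵀ * X * (Xᵀ * X)⁻¹ * Iab a b) :
    X = Y * Q ∧ Qᵀ * Iab a b * Q = Iab a b := by
  have hGram : IsUnit (Xᵀ * X) :=
    isUnit_of_rank_eq_card (by rw [rank_transpose_mul_self, hX, Fintype.card_fin])
  have hP : Xᵀ * (X * (Xᵀ * X)⁻¹) = 1 := by
    rw [← Matrix.mul_assoc, mul_nonsing_inv _ ((isUnit_iff_isUnit_det _).mp hGram)]
  rw [Matrix.mul_assoc _ X] at hQ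
  subst hQ
  exact ⟨eq_mul_of_mul_mul_transpose_eq (Iab_mul_self a b) hXY hP,
    transpose_mul_mul_self_of_mul_mul_transpose_eq (Iab_mul_self a b) (Iab_transpose a b)
      hXY hP⟩

/-- If `X, Y` are full column rank `n × (a+b)` real matrices with
`X I_{a,b} Xᵀ = Y I_{a,b} Yᵀ`, then `Q = I_{a,b} Yᵀ X (Xᵀ X)⁻¹ I_{a,b}` satisfies
`X = Y Q` and `Qᵀ I_{a,b} Q = I_{a,b}`. -/
theorem stmt1 (a b n : ℕ) (ha : 1 ≤ a) (hn : a + b ≤ n)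
    (X Y : Matrix (Fin n) (Fin (a + b)) ℝ)
    (hX : X.rank = a + b) (hY : Y.rank = a + b)
    (hXY : X * Iab a b * Xᵀ = Y * Iab a b * Yᵀ)
    (Q : Matrix (Fin (a + b)) (Fin (a + b)) ℝ)
    (hQ : Q = Iab a b * Yᵀ * X * (Xᵀ * X)⁻¹ * Iab a b) :
    X = Y * Q ∧ Qᵀ * Iab a b * Q = Iab a b :=
  stmt1_general a b n X Y hX hXY Q hQ
end

section
/- Let a ≥ 1 and b ≥ 0 be integers with d = a + b, and let Q be a d × d real matrix with Q I_{a,b} Qᵀ = I_{a,b}. Then every diagonal entry of Q Qᵀ is at least 1. Moreover, all diagonal entries of Q Qᵀ are equal to 1 if and only if Q is (a,b) block orthogonal, i.e. Q = diag(Q₁, Q₂) with Q₁ an a × a orthogonal matrix and Q₂ a b × b orthogonal matrix. -/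
open Matrix

/-- `I_{a,b}` as a block matrix over the index type `Fin a ⊕ Fin b`: the diagonal matrix
whose first `a` diagonal entries equal `1` and whose last `b` diagonal entries equal `-1`. -/
def IabS (a b : ℕ) : Matrix (Fin a ⊕ Fin b) (Fin a ⊕ Fin b) ℝ :=
  Matrix.fromBlocks 1 0 0 (-1)

/-!
Write `J = I_{a,b}` and `s⁺ᵢ, s⁻ᵢ` for the sums of squares of the entries of row `i` of `Q` in
the first `a` and the last `b` columns. Then `(Q Qᵀ)ᵢᵢ = s⁺ᵢ + s⁻ᵢ` while
`(Q J Qᵀ)ᵢᵢ = s⁺ᵢ - s⁻ᵢ = Jᵢᵢ`, so `(Q Qᵀ)ᵢᵢ = 1 + 2 s⁻ᵢ` for `i ≤ a` and `1 + 2 s⁺ᵢ` for `i > a`.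
Hence all these entries are `≥ 1`, with equality everywhere iff the off-diagonal blocks of `Q`
vanish; for `Q = diag(Q₁, Q₂)` the relation `Q J Qᵀ = J` says exactly that `Q₁` and `Q₂` are
orthogonal.
-/

section

variable {l m n : Type*} [Fintype m] [Fintype n]

theorem Matrix.mul_transpose_self_apply_self (Q : Matrix l (m ⊕ n) ℝ) (i : l) :
    (Q * Qᵀ) i i = ∑ j, Q i (.inl j) * Q i (.inl j) + ∑ j, Q i (.inr j) * Q i (.inr j) := by
  simp [mul_apply, Fintype.sum_sum_type]

theorem Matrix.mul_fromBlocks_one_neg_one_mul_transpose_apply_self [DecidableEq m] [DecidableEq n]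
    (Q : Matrix l (m ⊕ n) ℝ) (i : l) :
    (Q * (fromBlocks 1 0 0 (-1) : Matrix (m ⊕ n) (m ⊕ n) ℝ) * Qᵀ) i i =
      ∑ j, Q i (.inl j) * Q i (.inl j) - ∑ j, Q i (.inr j) * Q i (.inr j) := by
  have hJ : (fromBlocks 1 0 0 (-1) : Matrix (m ⊕ n) (m ⊕ n) ℝ) = diagonal (Sum.elim 1 (-1)) := by
    rw [← fromBlocks_diagonal, Pi.neg_def, ← diagonal_neg]
    rfl
  rw [hJ, mul_apply]
  simp [mul_diagonal, Fintype.sum_sum_type, sub_eq_add_neg]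

end

namespace IndefiniteOrthogonal

variable {m n : Type*} [Fintype m] [Fintype n] [DecidableEq m] [DecidableEq n]
  {Q : Matrix (m ⊕ n) (m ⊕ n) ℝ} (hQ : Q * fromBlocks 1 0 0 (-1) * Qᵀ = fromBlocks 1 0 0 (-1))
include hQ

theorem mul_transpose_self_apply_inl (i : m) :
    (Q * Qᵀ) (.inl i) (.inl i) = 1 + 2 * ∑ j, Q.toBlocks₁₂ i j * Q.toBlocks₁₂ i j := by
  have h := congr_fun₂ hQ (.inl i) (.inl i)
  rw [mul_fromBlocks_one_neg_one_mul_transpose_apply_self] at h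
  simp only [fromBlocks_apply₁₁, one_apply_eq] at h
  rw [mul_transpose_self_apply_self]
  simp only [toBlocks₁₂, of_apply]
  linarith

theorem mul_transpose_self_apply_inr (i : n) :
    (Q * Qᵀ) (.inr i) (.inr i) = 1 + 2 * ∑ j, Q.toBlocks₂₁ i j * Q.toBlocks₂₁ i j := by
  have h := congr_fun₂ hQ (.inr i) (.inr i)
  rw [mul_fromBlocks_one_neg_one_mul_transpose_apply_self] at h
  simp only [fromBlocks_apply₂₂, Matrix.neg_apply, one_apply_eq] at h
  rw [mul_transpose_self_apply_self]
  simp only [toBlocks₂₁, of_apply]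
  linarith

theorem one_le_mul_transpose_self_apply (i : m ⊕ n) : 1 ≤ (Q * Qᵀ) i i := by
  rcases i with i | i <;>
    simp only [mul_transpose_self_apply_inl hQ, mul_transpose_self_apply_inr hQ] <;>
    exact le_add_of_nonneg_right <|
      mul_nonneg zero_le_two (Finset.sum_nonneg fun j _ => mul_self_nonneg _)

theorem mul_transpose_self_diag_eq_one_iff :
    (∀ i, (Q * Qᵀ) i i = 1) ↔ Q.toBlocks₁₂ = 0 ∧ Q.toBlocks₂₁ = 0 := by
  simp only [Sum.forall, mul_transpose_self_apply_inl hQ, mul_transpose_self_apply_inr hQ,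
    add_eq_left, mul_eq_zero, two_ne_zero, false_or, Finset.sum_mul_self_eq_zero_iff,
    Finset.mem_univ, forall_const]
  simp [← Matrix.ext_iff]

theorem toBlocks₁₂_eq_zero_and_toBlocks₂₁_eq_zero_iff :
    Q.toBlocks₁₂ = 0 ∧ Q.toBlocks₂₁ = 0 ↔ ∃ (Q₁ : Matrix m m ℝ) (Q₂ : Matrix n n ℝ),
      Q₁ * Q₁ᵀ = 1 ∧ Q₂ * Q₂ᵀ = 1 ∧ Q = fromBlocks Q₁ 0 0 Q₂ := by
  constructor
  · rintro ⟨hB, hC⟩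
    have hQ_diag : Q = fromBlocks Q.toBlocks₁₁ 0 0 Q.toBlocks₂₂ := by
      rw [← hB, ← hC, fromBlocks_toBlocks]
    rw [hQ_diag, fromBlocks_transpose, fromBlocks_multiply, fromBlocks_multiply] at hQ
    obtain ⟨h₁, -, -, h₂⟩ := fromBlocks_inj.mp hQ
    exact ⟨_, _, by simpa using h₁, by simpa using h₂, hQ_diag⟩
  · rintro ⟨Q₁, Q₂, -, -, rfl⟩
    simp

end IndefiniteOrthogonal

theorem stmt4_general (a b : ℕ)
    (Q : Matrix (Fin a ⊕ Fin b) (Fin a ⊕ Fin b) ℝ)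
    (hQ : Q * IabS a b * Qᵀ = IabS a b) :
    (∀ i, 1 ≤ (Q * Qᵀ) i i) ∧
      ((∀ i, (Q * Qᵀ) i i = 1) ↔
        ∃ (Q₁ : Matrix (Fin a) (Fin a) ℝ) (Q₂ : Matrix (Fin b) (Fin b) ℝ),
          Q₁ * Q₁ᵀ = 1 ∧ Q₂ * Q₂ᵀ = 1 ∧ Q = Matrix.fromBlocks Q₁ 0 0 Q₂) := by
  exact ⟨IndefiniteOrthogonal.one_le_mul_transpose_self_apply hQ,
    (IndefiniteOrthogonal.mul_transpose_self_diag_eq_one_iff hQ).trans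
      (IndefiniteOrthogonal.toBlocks₁₂_eq_zero_and_toBlocks₂₁_eq_zero_iff hQ)⟩

/-- If `Q I_{a,b} Qᵀ = I_{a,b}` (with `a ≥ 1`, `b ≥ 0`), then every
diagonal entry of `Q Qᵀ` is at least `1`; and all diagonal entries of `Q Qᵀ` equal `1`
iff `Q = diag(Q₁, Q₂)` with `Q₁` an `a × a` orthogonal matrix and `Q₂` a `b × b`
orthogonal matrix. -/
theorem stmt4 (a b : ℕ) (ha : 1 ≤ a)
    (Q : Matrix (Fin a ⊕ Fin b) (Fin a ⊕ Fin b) ℝ)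
    (hQ : Q * IabS a b * Qᵀ = IabS a b) :
    (∀ i, 1 ≤ (Q * Qᵀ) i i) ∧
      ((∀ i, (Q * Qᵀ) i i = 1) ↔
        ∃ (Q₁ : Matrix (Fin a) (Fin a) ℝ) (Q₂ : Matrix (Fin b) (Fin b) ℝ),
          Q₁ * Q₁ᵀ = 1 ∧ Q₂ * Q₂ᵀ = 1 ∧ Q = Matrix.fromBlocks Q₁ 0 0 Q₂) :=
  stmt4_general a b Q hQ
end

section
/- Let a ≥ 1 and b ≥ 0 be integers with d = a + b. Let Z be an n × d real matrix such that Zᵀ Z is a diagonal matrix with strictly positive diagonal entries, let Q be a d × d real matrix with Q I_{a,b} Qᵀ = I_{a,b}, and set X = Z Q. Then the Frobenius norms satisfy ‖Z‖_F ≤ ‖X‖_F. -/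
open Matrix

/-- The Frobenius norm of a real matrix: the square root of the sum of squares of
its entries. -/
noncomputable def frobNorm {m n : Type*} [Fintype m] [Fintype n]
    (M : Matrix m n ℝ) : ℝ :=
  Real.sqrt (∑ i, ∑ j, (M i j) ^ 2)

/-!
With `D = Zᵀ Z = diagonal w`, we have `‖Z‖_F² = tr D` and `‖X‖_F² = tr (Qᵀ D Q) = ∑ₖ wₖ ‖Qₖ‖²`,
where `Qₖ` is the `k`-th row of `Q`. The `(k, k)` entry of `Q I_{a,b} Qᵀ = I_{a,b}` reads
`∑ⱼ ±Qₖⱼ² = ±1`, so `‖Qₖ‖² ≥ 1`, and the claim follows from `wₖ ≥ 0`.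
-/

section

variable {m n : Type*} [Fintype m] [Fintype n]

theorem frobNorm_eq_sqrt_trace (M : Matrix m n ℝ) : frobNorm M = √(trace (Mᵀ * M)) := by
  simp only [frobNorm, trace, diag_apply, mul_apply, transpose_apply, sq]
  rw [Finset.sum_comm]

theorem one_le_sum_sq_row_of_mul_diagonal_mul_transpose [DecidableEq m] {s : m → ℝ}
    (hs : ∀ i, |s i| = 1) {Q : Matrix m m ℝ} (hQ : Q * diagonal s * Qᵀ = diagonal s) (i : m) :
    1 ≤ ∑ j, Q i j ^ 2 := by
  have hii : ∑ j, Q i j * s j * Q i j = s i := by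
    simpa only [mul_apply (M := Q * diagonal s), mul_diagonal, transpose_apply, diagonal_apply_eq]
      using congrFun (congrFun hQ i) i
  calc (1 : ℝ) = |∑ j, Q i j * s j * Q i j| := by rw [hii, hs i]
    _ ≤ ∑ j, |Q i j * s j * Q i j| := Finset.abs_sum_le_sum_abs _ _
    _ = ∑ j, Q i j ^ 2 := by
      refine Finset.sum_congr rfl fun j _ => ?_
      rw [abs_mul, abs_mul, hs j, mul_one, ← sq, sq_abs]

theorem trace_diagonal_le_trace_transpose_mul_diagonal_mul [DecidableEq m] {w : m → ℝ}
    (hw : ∀ k, 0 ≤ w k) {Q : Matrix m n ℝ} (hQ : ∀ k, 1 ≤ ∑ j, Q k j ^ 2) :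
    trace (diagonal w) ≤ trace (Qᵀ * diagonal w * Q) := by
  have hexpand : trace (Qᵀ * diagonal w * Q) = ∑ k, w k * ∑ j, Q k j ^ 2 := by
    simp only [trace, diag_apply, mul_apply (M := Qᵀ * diagonal w), mul_diagonal, transpose_apply,
      Finset.mul_sum]
    rw [Finset.sum_comm]
    exact Finset.sum_congr rfl fun k _ => Finset.sum_congr rfl fun j _ => by ring
  rw [trace_diagonal, hexpand]
  exact Finset.sum_le_sum fun k _ => le_mul_of_one_le_right (hw k) (hQ k)

end

theorem abs_Iab_diag (a b : ℕ) (i : Fin (a + b)) :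
    |(if (i : ℕ) < a then (1 : ℝ) else -1)| = 1 := by
  split_ifs <;> simp

theorem stmt6_general (n a b : ℕ)
    (Z : Matrix (Fin n) (Fin (a + b)) ℝ) (w : Fin (a + b) → ℝ)
    (hw : ∀ i, 0 < w i) (hZ : Zᵀ * Z = Matrix.diagonal w)
    (Q : Matrix (Fin (a + b)) (Fin (a + b)) ℝ)
    (hQ : Q * Iab a b * Qᵀ = Iab a b)
    (X : Matrix (Fin n) (Fin (a + b)) ℝ) (hX : X = Z * Q) :
    frobNorm Z ≤ frobNorm X := by
  have hXX : Xᵀ * X = Qᵀ * diagonal w * Q := by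
    rw [hX, transpose_mul, Matrix.mul_assoc, ← Matrix.mul_assoc Zᵀ, hZ, ← Matrix.mul_assoc]
  rw [frobNorm_eq_sqrt_trace, frobNorm_eq_sqrt_trace, hZ, hXX]
  exact Real.sqrt_le_sqrt <| trace_diagonal_le_trace_transpose_mul_diagonal_mul
    (fun k => (hw k).le) (one_le_sum_sq_row_of_mul_diagonal_mul_transpose (abs_Iab_diag a b) hQ)

/-- If `Zᵀ Z` is diagonal with strictly positive diagonal entries,
`Q I_{a,b} Qᵀ = I_{a,b}` and `X = Z Q`, then `‖Z‖_F ≤ ‖X‖_F`. -/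
theorem stmt6 (n a b : ℕ) (ha : 1 ≤ a)
    (Z : Matrix (Fin n) (Fin (a + b)) ℝ) (w : Fin (a + b) → ℝ)
    (hw : ∀ i, 0 < w i) (hZ : Zᵀ * Z = Matrix.diagonal w)
    (Q : Matrix (Fin (a + b)) (Fin (a + b)) ℝ)
    (hQ : Q * Iab a b * Qᵀ = Iab a b)
    (X : Matrix (Fin n) (Fin (a + b)) ℝ) (hX : X = Z * Q) :
    frobNorm Z ≤ frobNorm X :=
  stmt6_general n a b Z w hw hZ Q hQ X hX
end

section
/- Let a ≥ 1 and b ≥ 0 be integers with d = a + b. Let Z be an n × d real matrix such that Zᵀ Z is a diagonal matrix with strictly positive diagonal entries, let Q be a d × d real matrix with Q I_{a,b} Qᵀ = I_{a,b}, and set X = Z Q. Then the spectral (operator ℓ₂ → ℓ₂) norms satisfy ‖Z‖ ≤ ‖X‖. -/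
/-!
With the operator norm, `‖Z‖² = ‖Zᵀ Z‖ = ‖diag w‖ = maxᵢ |wᵢ|`. Since `Zᵀ X = diag w · Q`, whose
`i`-th row is `wᵢ` times the `i`-th row of `Q`, and every row of `Q` has Euclidean norm at least `1`
(compare the diagonal entries of `Q I_{a,b} Qᵀ = I_{a,b}`), we get
`‖Z‖² ≤ ‖Zᵀ X‖ ≤ ‖Z‖ ‖X‖`.
-/

open Matrix

/-- The spectral norm (operator `ℓ₂ → ℓ₂` norm, i.e. largest singular value) of a real
matrix, defined as the operator norm of the induced linear map between Euclidean
spaces. -/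
noncomputable def specNorm {m n : Type*} [Fintype m] [Fintype n]
    [DecidableEq n] (M : Matrix m n ℝ) : ℝ :=
  ‖LinearMap.toContinuousLinearMap (Matrix.toEuclideanLin M)‖

open WithLp
open scoped Matrix.Norms.L2Operator

theorem specNorm_eq_l2_opNorm {m n : Type*} [Fintype m] [Fintype n] [DecidableEq n]
    (M : Matrix m n ℝ) : specNorm M = ‖M‖ := rfl

section

variable {𝕜 m n : Type*} [RCLike 𝕜] [Fintype m] [Fintype n] [DecidableEq m] [DecidableEq n]

theorem norm_row_le_l2_opNorm (M : Matrix m n 𝕜) (i : m) : ‖toLp 2 (M i)‖ ≤ ‖M‖ := by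
  have h := Mᴴ.l2_opNorm_mulVec (toLp 2 (Pi.single i 1))
  rw [l2_opNorm_conjTranspose] at h
  convert h using 1
  · simp [EuclideanSpace.norm_eq, mulVec_single]
  · simp

theorem norm_le_l2_opNorm_diagonal_mul (w : n → 𝕜) (Q : Matrix n m 𝕜)
    (hQ : ∀ i, 1 ≤ ‖toLp 2 (Q i)‖) : ‖w‖ ≤ ‖diagonal w * Q‖ := by
  refine (pi_norm_le_iff_of_nonneg (norm_nonneg _)).mpr fun i ↦ ?_
  calc ‖w i‖ ≤ ‖w i‖ * ‖toLp 2 (Q i)‖ := le_mul_of_one_le_right (norm_nonneg _) (hQ i)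
    _ = ‖toLp 2 ((diagonal w * Q) i)‖ := by
      rw [← norm_smul, ← toLp_smul]
      congr 2
      ext k
      simp [diagonal_mul]
    _ ≤ ‖diagonal w * Q‖ := norm_row_le_l2_opNorm _ i

theorem l2_opNorm_le_l2_opNorm_mul_of_conjTranspose_mul_self_eq_diagonal
    {Z : Matrix m n 𝕜} {w : n → 𝕜} (hZ : Zᴴ * Z = diagonal w) {Q : Matrix n n 𝕜}
    (hQ : ∀ i, 1 ≤ ‖toLp 2 (Q i)‖) : ‖Z‖ ≤ ‖Z * Q‖ := by
  rcases (norm_nonneg Z).eq_or_lt with hZ0 | hZ0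
  · exact hZ0 ▸ norm_nonneg _
  refine le_of_mul_le_mul_left ?_ hZ0
  calc ‖Z‖ * ‖Z‖ = ‖w‖ := by rw [← l2_opNorm_conjTranspose_mul_self, hZ, l2_opNorm_diagonal]
    _ ≤ ‖diagonal w * Q‖ := norm_le_l2_opNorm_diagonal_mul w Q hQ
    _ = ‖Zᴴ * (Z * Q)‖ := by rw [← Matrix.mul_assoc, hZ]
    _ ≤ ‖Z‖ * ‖Z * Q‖ := by
      grw [l2_opNorm_mul]; rw [l2_opNorm_conjTranspose]

theorem one_le_norm_row_of_mul_diagonal_mul_transpose_eq {ε : n → ℝ} (hε : ∀ k, |ε k| = 1)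
    {Q : Matrix n n ℝ} (hQ : Q * diagonal ε * Qᵀ = diagonal ε) (i : n) :
    1 ≤ ‖toLp 2 (Q i)‖ := by
  have hdiag : ∑ k, ε k * Q i k ^ 2 = ε i := by
    simpa [mul_apply, diagonal_apply, sq, mul_comm, mul_left_comm] using
      congr_fun (congr_fun hQ i) i
  have hsq : 1 ≤ ‖toLp 2 (Q i)‖ ^ 2 := calc
    1 = |∑ k, ε k * Q i k ^ 2| := by rw [hdiag, hε]
    _ ≤ ∑ k, |ε k * Q i k ^ 2| := Finset.abs_sum_le_sum_abs _ _
    _ = ‖toLp 2 (Q i)‖ ^ 2 := by simp [EuclideanSpace.norm_sq_eq, abs_mul, hε]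
  nlinarith [norm_nonneg (toLp 2 (Q i)), hsq]

end

theorem stmt7_general (n a b : ℕ)
    (Z : Matrix (Fin n) (Fin (a + b)) ℝ) (w : Fin (a + b) → ℝ)
    (hZ : Zᵀ * Z = Matrix.diagonal w)
    (Q : Matrix (Fin (a + b)) (Fin (a + b)) ℝ)
    (hQ : Q * Iab a b * Qᵀ = Iab a b)
    (X : Matrix (Fin n) (Fin (a + b)) ℝ) (hX : X = Z * Q) :
    specNorm Z ≤ specNorm X := by
  have hsign : ∀ i : Fin (a + b), |(if (i : ℕ) < a then (1 : ℝ) else -1)| = 1 := fun i ↦ by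
    split_ifs <;> simp
  have hrows := one_le_norm_row_of_mul_diagonal_mul_transpose_eq hsign hQ
  rw [specNorm_eq_l2_opNorm, specNorm_eq_l2_opNorm, hX]
  exact l2_opNorm_le_l2_opNorm_mul_of_conjTranspose_mul_self_eq_diagonal
    (by rwa [conjTranspose_eq_transpose_of_trivial]) hrows

/-- If `Zᵀ Z` is diagonal with strictly positive diagonal entries,
`Q I_{a,b} Qᵀ = I_{a,b}` and `X = Z Q`, then the spectral norms satisfy `‖Z‖ ≤ ‖X‖`. -/
theorem stmt7 (n a b : ℕ) (ha : 1 ≤ a)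
    (Z : Matrix (Fin n) (Fin (a + b)) ℝ) (w : Fin (a + b) → ℝ)
    (hw : ∀ i, 0 < w i) (hZ : Zᵀ * Z = Matrix.diagonal w)
    (Q : Matrix (Fin (a + b)) (Fin (a + b)) ℝ)
    (hQ : Q * Iab a b * Qᵀ = Iab a b)
    (X : Matrix (Fin n) (Fin (a + b)) ℝ) (hX : X = Z * Q) :
    specNorm Z ≤ specNorm X :=
  stmt7_general n a b Z w hZ Q hQ X hX
end

section
/- Let a ≥ 1 and b ≥ 0 be integers with d = a + b. Let Z be an n × d real matrix such that Zᵀ Z is a diagonal matrix with strictly positive diagonal entries, let Q be a d × d real matrix with Q I_{a,b} Qᵀ = I_{a,b}, and set X = Z Q. Then ‖Z‖_F = ‖X‖_F if and only if Q is (a,b) block orthogonal, i.e. Q = diag(Q₁, Q₂) with Q₁ an a × a orthogonal matrix and Q₂ a b × b orthogonal matrix. -/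
/-!
Write `Q` in blocks `[[A, B], [C, D]]`. The relation `Q I_{a,b} Qᵀ = I_{a,b}` gives
`A Aᵀ = 1 + B Bᵀ` and `D Dᵀ = 1 + C Cᵀ`, so the diagonal of `Q Qᵀ` is `1 + 2 diag (B Bᵀ)` on the
first block and `1 + 2 diag (C Cᵀ)` on the second. Since `‖Z Q‖_F² = tr (Qᵀ (Zᵀ Z) Q)
= ∑ₖ wₖ (Q Qᵀ)ₖₖ` and `‖Z‖_F² = ∑ₖ wₖ`, the excess `‖X‖_F² - ‖Z‖_F²` is a positively weighted
sum of the squared entries of `B` and `C`. It vanishes iff `B = C = 0`, and then the block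
relations say that `A` and `D` are orthogonal.
-/

open Matrix

namespace Matrix

variable {k l m n : Type*} [Fintype n]

theorem diag_mul_transpose_self_nonneg (B : Matrix m n ℝ) (i : m) : 0 ≤ (B * Bᵀ) i i :=
  dotProduct_self_star_nonneg (B i)

theorem diag_mul_transpose_self_eq_zero_iff (B : Matrix m n ℝ) (i : m) :
    (B * Bᵀ) i i = 0 ↔ B i = 0 :=
  dotProduct_self_eq_zero

variable [Fintype m]

theorem sum_mul_diag_mul_transpose_self_nonneg {c : m → ℝ} (hc : ∀ i, 0 ≤ c i)
    (B : Matrix m n ℝ) : 0 ≤ ∑ i, c i * (B * Bᵀ) i i :=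
  Finset.sum_nonneg fun i _ => mul_nonneg (hc i) (diag_mul_transpose_self_nonneg B i)

theorem sum_mul_diag_mul_transpose_self_eq_zero_iff {c : m → ℝ} (hc : ∀ i, 0 < c i)
    (B : Matrix m n ℝ) : ∑ i, c i * (B * Bᵀ) i i = 0 ↔ B = 0 := by
  rw [Finset.sum_eq_zero_iff_of_nonneg fun i _ =>
    mul_nonneg (hc i).le (diag_mul_transpose_self_nonneg B i)]
  simp only [Finset.mem_univ, true_implies, mul_eq_zero, (hc _).ne', false_or,
    diag_mul_transpose_self_eq_zero_iff]
  exact ⟨funext, congrFun⟩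

theorem trace_diagonal_mul [DecidableEq m] (w : m → ℝ) (M : Matrix m m ℝ) :
    trace (diagonal w * M) = ∑ i, w i * M i i := by
  simp only [trace, diag_apply, diagonal_mul]

theorem fromBlocks_mul_fromBlocks_one_neg_one_mul_transpose [DecidableEq m] [DecidableEq n]
    (A : Matrix l m ℝ) (B : Matrix l n ℝ) (C : Matrix k m ℝ) (D : Matrix k n ℝ) :
    fromBlocks A B C D * (fromBlocks 1 0 0 (-1) : Matrix (m ⊕ n) (m ⊕ n) ℝ) *
        (fromBlocks A B C D)ᵀ =
      fromBlocks (A * Aᵀ - B * Bᵀ) (A * Cᵀ - B * Dᵀ) (C * Aᵀ - D * Bᵀ) (C * Cᵀ - D * Dᵀ) := by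
  simp [fromBlocks_transpose, fromBlocks_multiply, sub_eq_add_neg]

variable [Fintype k] [Fintype l]

theorem sum_sq_entries_eq_trace_transpose_mul (M : Matrix m n ℝ) :
    ∑ i, ∑ j, M i j ^ 2 = trace (Mᵀ * M) := by
  rw [Finset.sum_comm]
  simp only [trace, diag_apply, mul_apply, transpose_apply, sq]

theorem frobNorm_eq_frobNorm_iff (M : Matrix k l ℝ) (N : Matrix m n ℝ) :
    frobNorm M = frobNorm N ↔ trace (Mᵀ * M) = trace (Nᵀ * N) := by
  rw [frobNorm, frobNorm, Real.sqrt_inj (by positivity) (by positivity),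
    sum_sq_entries_eq_trace_transpose_mul, sum_sq_entries_eq_trace_transpose_mul]

theorem trace_transpose_mul_of_transpose_mul_eq_diagonal [DecidableEq m] {Z : Matrix k m ℝ}
    {w : m → ℝ} (hZ : Zᵀ * Z = diagonal w) (Q : Matrix m n ℝ) :
    trace ((Z * Q)ᵀ * (Z * Q)) = ∑ i, w i * (Q * Qᵀ) i i := by
  rw [transpose_mul, Matrix.mul_assoc, ← Matrix.mul_assoc Zᵀ, hZ, trace_mul_comm,
    Matrix.mul_assoc, trace_diagonal_mul]

theorem sum_mul_diag_fromBlocks_mul_transpose (A : Matrix l m ℝ) (B : Matrix l n ℝ)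
    (C : Matrix k m ℝ) (D : Matrix k n ℝ) (w : l ⊕ k → ℝ) :
    ∑ i, w i * (fromBlocks A B C D * (fromBlocks A B C D)ᵀ) i i =
      ∑ i, w (.inl i) * (A * Aᵀ + B * Bᵀ) i i + ∑ j, w (.inr j) * (C * Cᵀ + D * Dᵀ) j j := by
  rw [fromBlocks_transpose, fromBlocks_multiply, Fintype.sum_sum_type]
  rfl

variable [DecidableEq m] [DecidableEq n] {A : Matrix m m ℝ} {B : Matrix m n ℝ}
  {C : Matrix n m ℝ} {D : Matrix n n ℝ}

theorem sum_mul_diag_mul_transpose_eq_sum_iff {w : m ⊕ n → ℝ} (hw : ∀ i, 0 < w i)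
    (hQ : fromBlocks A B C D * fromBlocks 1 0 0 (-1) * (fromBlocks A B C D)ᵀ =
      fromBlocks 1 0 0 (-1)) :
    ∑ i, w i * (fromBlocks A B C D * (fromBlocks A B C D)ᵀ) i i = ∑ i, w i ↔
      B = 0 ∧ C = 0 := by
  rw [fromBlocks_mul_fromBlocks_one_neg_one_mul_transpose, fromBlocks_inj] at hQ
  obtain ⟨hA, -, -, hD⟩ := hQ
  have hAB : A * Aᵀ + B * Bᵀ = 1 + (B * Bᵀ + B * Bᵀ) := by
    rw [sub_eq_iff_eq_add.mp hA]; abel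
  have hCD : C * Cᵀ + D * Dᵀ = 1 + (C * Cᵀ + C * Cᵀ) := by
    rw [sub_eq_iff_eq_add.mp hD]; abel
  have hB := sum_mul_diag_mul_transpose_self_nonneg (fun i => (hw (.inl i)).le) B
  have hC := sum_mul_diag_mul_transpose_self_nonneg (fun j => (hw (.inr j)).le) C
  rw [sum_mul_diag_fromBlocks_mul_transpose, hAB, hCD, Fintype.sum_sum_type w]
  simp only [add_apply, one_apply_eq, mul_add, mul_one, Finset.sum_add_distrib]
  rw [← sum_mul_diag_mul_transpose_self_eq_zero_iff (fun i => hw (.inl i)),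
    ← sum_mul_diag_mul_transpose_self_eq_zero_iff (fun j => hw (.inr j)),
    ← add_eq_zero_iff_of_nonneg hB hC]
  constructor <;> intro h <;> linarith

theorem exists_fromBlocks_orthogonal_iff
    (hQ : fromBlocks A B C D * fromBlocks 1 0 0 (-1) * (fromBlocks A B C D)ᵀ =
      fromBlocks 1 0 0 (-1)) :
    (∃ (Q₁ : Matrix m m ℝ) (Q₂ : Matrix n n ℝ),
      Q₁ * Q₁ᵀ = 1 ∧ Q₂ * Q₂ᵀ = 1 ∧ fromBlocks A B C D = fromBlocks Q₁ 0 0 Q₂) ↔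
      B = 0 ∧ C = 0 := by
  constructor
  · rintro ⟨Q₁, Q₂, -, -, h⟩
    obtain ⟨-, hB, hC, -⟩ := fromBlocks_inj.mp h
    exact ⟨hB, hC⟩
  · rintro ⟨rfl, rfl⟩
    rw [fromBlocks_mul_fromBlocks_one_neg_one_mul_transpose, fromBlocks_inj] at hQ
    obtain ⟨hA, -, -, hD⟩ := hQ
    exact ⟨A, D, by simpa using hA, by simpa using hD, rfl⟩

end Matrix

theorem stmt8_general (n a b : ℕ)
    (Z : Matrix (Fin n) (Fin a ⊕ Fin b) ℝ) (w : Fin a ⊕ Fin b → ℝ)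
    (hw : ∀ i, 0 < w i) (hZ : Zᵀ * Z = Matrix.diagonal w)
    (Q : Matrix (Fin a ⊕ Fin b) (Fin a ⊕ Fin b) ℝ)
    (hQ : Q * IabS a b * Qᵀ = IabS a b)
    (X : Matrix (Fin n) (Fin a ⊕ Fin b) ℝ) (hX : X = Z * Q) :
    frobNorm Z = frobNorm X ↔
      ∃ (Q₁ : Matrix (Fin a) (Fin a) ℝ) (Q₂ : Matrix (Fin b) (Fin b) ℝ),
        Q₁ * Q₁ᵀ = 1 ∧ Q₂ * Q₂ᵀ = 1 ∧ Q = Matrix.fromBlocks Q₁ 0 0 Q₂ := by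
  obtain ⟨A, B, C, D, rfl⟩ : ∃ A B C D, Q = fromBlocks A B C D :=
    ⟨_, _, _, _, (fromBlocks_toBlocks Q).symm⟩
  rw [exists_fromBlocks_orthogonal_iff hQ, ← sum_mul_diag_mul_transpose_eq_sum_iff hw hQ,
    frobNorm_eq_frobNorm_iff, hX, trace_transpose_mul_of_transpose_mul_eq_diagonal hZ, hZ,
    trace_diagonal, eq_comm]

/-- If `Zᵀ Z` is diagonal with strictly positive diagonal entries,
`Q I_{a,b} Qᵀ = I_{a,b}` and `X = Z Q`, then `‖Z‖_F = ‖X‖_F` iff `Q` is `(a,b)` block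
orthogonal, i.e. `Q = diag(Q₁, Q₂)` with `Q₁` an `a × a` orthogonal matrix and `Q₂` a
`b × b` orthogonal matrix. -/
theorem stmt8 (n a b : ℕ) (ha : 1 ≤ a)
    (Z : Matrix (Fin n) (Fin a ⊕ Fin b) ℝ) (w : Fin a ⊕ Fin b → ℝ)
    (hw : ∀ i, 0 < w i) (hZ : Zᵀ * Z = Matrix.diagonal w)
    (Q : Matrix (Fin a ⊕ Fin b) (Fin a ⊕ Fin b) ℝ)
    (hQ : Q * IabS a b * Qᵀ = IabS a b)
    (X : Matrix (Fin n) (Fin a ⊕ Fin b) ℝ) (hX : X = Z * Q) :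
    frobNorm Z = frobNorm X ↔
      ∃ (Q₁ : Matrix (Fin a) (Fin a) ℝ) (Q₂ : Matrix (Fin b) (Fin b) ℝ),
        Q₁ * Q₁ᵀ = 1 ∧ Q₂ * Q₂ᵀ = 1 ∧ Q = Matrix.fromBlocks Q₁ 0 0 Q₂ :=
  stmt8_general n a b Z w hw hZ Q hQ X hX
end

section
/- Let d ≥ 2, let x, y ∈ ℝ^d with x₁ ≠ 0 and y₁ ≠ 0, and let D = diag(δ₁, D₂) be an invertible d × d diagonal matrix with δ₁ ≠ 0. Set u = D⁻¹x and v = D⁻¹y. Let Σ_x and Σ_y be d × d real symmetric matrices and set Σ_u = D⁻¹ Σ_x D⁻¹ and Σ_v = D⁻¹ Σ_y D⁻¹. Define V = J̃(x) Σ_x J̃(x)ᵀ + J̃(y) Σ_y J̃(y)ᵀ and V' = J̃(u) Σ_u J̃(u)ᵀ + J̃(v) Σ_v J̃(v)ᵀ. If V is invertible, then V' = δ₁² D₂⁻¹ V D₂⁻¹ is invertible and (s̃(u) − s̃(v))ᵀ (V')⁻¹ (s̃(u) − s̃(v)) = (s̃(x) − s̃(y))ᵀ V⁻¹ (s̃(x)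 − s̃(y)); that is, the Mahalanobis quadratic form based on the coordinate-ratio transform s̃ is the same whether computed from (x, y, Σ_x, Σ_y) or from the diagonally rescaled data (u, v, Σ_u, Σ_v). -/
open Matrix

/-- `s̃(ξ) = ξ_{2:d} / ξ₁`: the vector of coordinate ratios (here `d = m + 1`). -/
noncomputable def stil {m : ℕ} (ξ : Fin (m + 1) → ℝ) : Fin m → ℝ :=
  fun i => ξ i.succ / ξ 0

/-- `J̃(ξ) = (1/ξ₁)[−s̃(ξ) | I]`: the `(d−1) × d` Jacobian of `s̃` (here `d = m + 1`). -/
noncomputable def Jtil {m : ℕ} (ξ : Fin (m + 1) → ℝ) :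
    Matrix (Fin m) (Fin (m + 1)) ℝ :=
  Matrix.of fun i j =>
    (ξ 0)⁻¹ *
      (Fin.cons (-(stil ξ i)) (fun j' : Fin m => if j' = i then (1 : ℝ) else 0) :
        Fin (m + 1) → ℝ) j

/-!
The ratio map `s̃` is homogeneous of degree zero, so `s̃(D⁻¹ξ) = M s̃(ξ)` with `M = δ₁ D₂⁻¹`, and
correspondingly `J̃(D⁻¹ξ) = M J̃(ξ) D`. Hence
`J̃(u) Σ_u J̃(u)ᵀ = M J̃(x) D (D⁻¹ Σ_x D⁻¹) D J̃(x)ᵀ Mᵀ = M J̃(x) Σ_x J̃(x)ᵀ Mᵀ`, so `V' = M V Mᵀ`, and a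
Mahalanobis form is invariant when the vector and the covariance are transformed by the same
invertible `M`.
-/

theorem Matrix.inv_diagonal_of_ne_zero {n K : Type*} [Fintype n] [DecidableEq n] [Field K]
    {w : n → K} (hw : ∀ i, w i ≠ 0) : (diagonal w)⁻¹ = diagonal w⁻¹ :=
  inv_eq_right_inv <| by
    rw [diagonal_mul_diagonal, ← diagonal_one]
    exact congrArg diagonal (funext fun i => mul_inv_cancel₀ (hw i))

theorem Matrix.mul_mul_inv_mul_inv_mul_transpose {l n R : Type*} [Fintype n] [DecidableEq n]
    [CommRing R] (A : Matrix l n R) {D : Matrix n n R} (hD : IsUnit D.det) (hDt : Dᵀ = D)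
    (S : Matrix n n R) : A * D * (D⁻¹ * S * D⁻¹) * (A * D)ᵀ = A * S * Aᵀ := by
  rw [transpose_mul, hDt]
  simp only [Matrix.mul_assoc, mul_nonsing_inv_cancel_left, nonsing_inv_mul_cancel_left, hD]

theorem Matrix.dotProduct_inv_mulVec_conj {n R : Type*} [Fintype n] [DecidableEq n] [CommRing R]
    {M : Matrix n n R} (hM : IsUnit M.det) (V : Matrix n n R) (a : n → R) :
    (M *ᵥ a) ⬝ᵥ ((M * V * Mᵀ)⁻¹ *ᵥ (M *ᵥ a)) = a ⬝ᵥ (V⁻¹ *ᵥ a) := by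
  have hMt : IsUnit Mᵀ.det := by rwa [det_transpose]
  rw [mul_inv_rev, mul_inv_rev, mulVec_mulVec, Matrix.mul_assoc, Matrix.mul_assoc,
    nonsing_inv_mul _ hM, Matrix.mul_one, dotProduct_mulVec,
    ← vecMul_transpose, vecMul_vecMul, ← Matrix.mul_assoc, mul_nonsing_inv _ hMt,
    Matrix.one_mul, ← dotProduct_mulVec]

section Rescale

variable {m : ℕ} {w : Fin (m + 1) → ℝ}

/-- `δ₁ D₂⁻¹`, for `D = diag(w)`. -/
noncomputable def ratioRescale (w : Fin (m + 1) → ℝ) : Matrix (Fin m) (Fin m) ℝ :=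
  w 0 • (diagonal fun i : Fin m => w i.succ)⁻¹

theorem ratioRescale_eq_diagonal (hw : ∀ i, w i ≠ 0) :
    ratioRescale w = diagonal fun i => w 0 / w i.succ := by
  rw [ratioRescale, inv_diagonal_of_ne_zero (w := fun i : Fin m => w i.succ) fun i => hw i.succ,
    ← diagonal_smul]
  congr 1

theorem transpose_ratioRescale (hw : ∀ i, w i ≠ 0) : (ratioRescale w)ᵀ = ratioRescale w := by
  rw [ratioRescale_eq_diagonal hw, diagonal_transpose]

theorem isUnit_det_ratioRescale (hw : ∀ i, w i ≠ 0) : IsUnit (ratioRescale w).det := by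
  rw [ratioRescale_eq_diagonal hw, det_diagonal, isUnit_iff_ne_zero]
  exact Finset.prod_ne_zero_iff.mpr fun i _ => div_ne_zero (hw 0) (hw i.succ)

theorem stil_inv_diagonal_mulVec (hw : ∀ i, w i ≠ 0) (x : Fin (m + 1) → ℝ) :
    stil ((diagonal w)⁻¹ *ᵥ x) = ratioRescale w *ᵥ stil x := by
  ext i
  simp only [stil, ratioRescale_eq_diagonal hw, inv_diagonal_of_ne_zero hw, mulVec_diagonal,
    Pi.inv_apply, div_eq_mul_inv, mul_inv, inv_inv]
  ring

theorem Jtil_inv_diagonal_mulVec (hw : ∀ i, w i ≠ 0) (x : Fin (m + 1) → ℝ) :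
    Jtil ((diagonal w)⁻¹ *ᵥ x) = ratioRescale w * Jtil x * diagonal w := by
  ext i j
  simp only [Jtil, stil, ratioRescale_eq_diagonal hw, inv_diagonal_of_ne_zero hw,
    mulVec_diagonal, mul_diagonal, diagonal_mul, of_apply, Pi.inv_apply]
  refine Fin.cases ?_ (fun j => ?_) j
  · simp only [Fin.cons_zero, div_eq_mul_inv, mul_inv, inv_inv]
    ring
  · by_cases h : j = i
    · subst h
      simp only [Fin.cons_succ, if_true, mul_inv]
      field_simp [hw j.succ]
    · simp [h]

end Rescale

theorem stmt17_general (m : ℕ)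
    (x y : Fin (m + 1) → ℝ)
    (w : Fin (m + 1) → ℝ) (hw : ∀ i, w i ≠ 0)
    (D : Matrix (Fin (m + 1)) (Fin (m + 1)) ℝ) (hD : D = Matrix.diagonal w)
    (u v : Fin (m + 1) → ℝ) (hu : u = D⁻¹ *ᵥ x) (hv : v = D⁻¹ *ᵥ y)
    (Sx Sy : Matrix (Fin (m + 1)) (Fin (m + 1)) ℝ)
    (Su Sv : Matrix (Fin (m + 1)) (Fin (m + 1)) ℝ)
    (hSu : Su = D⁻¹ * Sx * D⁻¹) (hSv : Sv = D⁻¹ * Sy * D⁻¹)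
    (V V' : Matrix (Fin m) (Fin m) ℝ)
    (hV : V = Jtil x * Sx * (Jtil x)ᵀ + Jtil y * Sy * (Jtil y)ᵀ)
    (hV' : V' = Jtil u * Su * (Jtil u)ᵀ + Jtil v * Sv * (Jtil v)ᵀ)
    (hVinv : IsUnit V.det) :
    V' = (w 0) ^ 2 •
        ((Matrix.diagonal fun i : Fin m => w i.succ)⁻¹ * V *
          (Matrix.diagonal fun i : Fin m => w i.succ)⁻¹) ∧
    IsUnit V'.det ∧
    (stil u - stil v) ⬝ᵥ (V'⁻¹ *ᵥ (stil u - stil v)) =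
      (stil x - stil y) ⬝ᵥ (V⁻¹ *ᵥ (stil x - stil y)) := by
  subst hD hu hv hSu hSv
  have hDdet : IsUnit (diagonal w).det := by
    rw [det_diagonal]
    exact IsUnit.mk0 _ (Finset.prod_ne_zero_iff.mpr fun i _ => hw i)
  have hV'conj : V' = ratioRescale w * V * (ratioRescale w)ᵀ := by
    rw [hV', hV, Jtil_inv_diagonal_mulVec hw, Jtil_inv_diagonal_mulVec hw,
      mul_mul_inv_mul_inv_mul_transpose _ hDdet (diagonal_transpose w),
      mul_mul_inv_mul_inv_mul_transpose _ hDdet (diagonal_transpose w)]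
    simp only [Matrix.mul_add, Matrix.add_mul, Matrix.mul_assoc, transpose_mul]
  refine ⟨?_, ?_, ?_⟩
  · rw [hV'conj, transpose_ratioRescale hw, ratioRescale, smul_mul, smul_mul, Matrix.mul_smul,
      smul_smul, ← sq]
  · rw [hV'conj, det_mul, det_mul, det_transpose]
    exact ((isUnit_det_ratioRescale hw).mul hVinv).mul (isUnit_det_ratioRescale hw)
  · rw [stil_inv_diagonal_mulVec hw, stil_inv_diagonal_mulVec hw, ← mulVec_sub, hV'conj,
      dotProduct_inv_mulVec_conj (isUnit_det_ratioRescale hw)]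

/-- The Mahalanobis quadratic form built from the coordinate-ratio
transform `s̃` is invariant under an invertible diagonal rescaling `D = diag(δ₁, D₂)`:
with `u = D⁻¹x`, `v = D⁻¹y`, `Σ_u = D⁻¹ Σ_x D⁻¹`, `Σ_v = D⁻¹ Σ_y D⁻¹`,
`V = J̃(x) Σ_x J̃(x)ᵀ + J̃(y) Σ_y J̃(y)ᵀ` and
`V' = J̃(u) Σ_u J̃(u)ᵀ + J̃(v) Σ_v J̃(v)ᵀ`, if `V` is invertible then
`V' = δ₁² D₂⁻¹ V D₂⁻¹` is invertible and
`(s̃(u) − s̃(v))ᵀ (V')⁻¹ (s̃(u) − s̃(v)) = (s̃(x) − s̃(y))ᵀ V⁻¹ (s̃(x) − s̃(y))`. -/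
theorem stmt17 (m : ℕ) (hm : 1 ≤ m)
    (x y : Fin (m + 1) → ℝ) (hx0 : x 0 ≠ 0) (hy0 : y 0 ≠ 0)
    (w : Fin (m + 1) → ℝ) (hw : ∀ i, w i ≠ 0)
    (D : Matrix (Fin (m + 1)) (Fin (m + 1)) ℝ) (hD : D = Matrix.diagonal w)
    (u v : Fin (m + 1) → ℝ) (hu : u = D⁻¹ *ᵥ x) (hv : v = D⁻¹ *ᵥ y)
    (Sx Sy : Matrix (Fin (m + 1)) (Fin (m + 1)) ℝ)
    (hSx : Sx.IsSymm) (hSy : Sy.IsSymm)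
    (Su Sv : Matrix (Fin (m + 1)) (Fin (m + 1)) ℝ)
    (hSu : Su = D⁻¹ * Sx * D⁻¹) (hSv : Sv = D⁻¹ * Sy * D⁻¹)
    (V V' : Matrix (Fin m) (Fin m) ℝ)
    (hV : V = Jtil x * Sx * (Jtil x)ᵀ + Jtil y * Sy * (Jtil y)ᵀ)
    (hV' : V' = Jtil u * Su * (Jtil u)ᵀ + Jtil v * Sv * (Jtil v)ᵀ)
    (hVinv : IsUnit V.det) :
    V' = (w 0) ^ 2 •
        ((Matrix.diagonal fun i : Fin m => w i.succ)⁻¹ * V *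
          (Matrix.diagonal fun i : Fin m => w i.succ)⁻¹) ∧
    IsUnit V'.det ∧
    (stil u - stil v) ⬝ᵥ (V'⁻¹ *ᵥ (stil u - stil v)) =
      (stil x - stil y) ⬝ᵥ (V⁻¹ *ᵥ (stil x - stil y)) :=
  stmt17_general m x y w hw D hD u v hu hv Sx Sy Su Sv hSu hSv V V' hV hV' hVinv
end
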